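/- arXiv:1604.08944 — 3 statements merged into one kernel-verified Lean document; each statement's English description precedes it below -/
import Mathlib

section
/- Let S ⊆ ℂⁿ be a finite set, let I and J be disjoint subsets of {1,...,n}, and let π_I : ℂⁿ → ℂ^|I| and π_J : ℂⁿ → ℂ^|J| be the projections onto the coordinates in I and J respectively. Suppose l₁ is a linear form on ℂ^|I| that is injective on π_I(S), l₂ is a linear form on ℂ^|J| that is injective on π_J(S), and s ∈ ℂ is such that the map (u,v) ↦ u + s·v is injective on the set Y₁ × Y₂, where Y₁ ⊇ l₁(π_I(S)) and Y₂ ⊇ l₂(π_J(S)) are finite supersets. Then the linear form x ↦ l₁(π_I(x)) + s·l₂(π_J(x)) is injective on π_{I∪J}(S). -/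
/-- If `l₁` is a linear form injective on `π_I(S)`, `l₂` is injective on
`π_J(S)` (with `I, J` disjoint coordinate sets), and `(u,v) ↦ u + s·v` is injective on
`Y₁ × Y₂` for finite supersets `Y₁ ⊇ l₁(π_I(S))`, `Y₂ ⊇ l₂(π_J(S))`, then
`x ↦ l₁(π_I x) + s·l₂(π_J x)` is injective on `π_{I∪J}(S)`. -/
theorem stmt_2 (n : ℕ) (S : Set (Fin n → ℂ)) (hS : S.Finite)
    (I J : Finset (Fin n)) (hIJ : Disjoint I J)
    (l₁ : ((i : {x // x ∈ I}) → ℂ) →ₗ[ℂ] ℂ) (l₂ : ((j : {x // x ∈ J}) → ℂ) →ₗ[ℂ] ℂ)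
    (s : ℂ) (Y₁ Y₂ : Set ℂ) (hY₁fin : Y₁.Finite) (hY₂fin : Y₂.Finite)
    (hY₁ : (fun x : Fin n → ℂ => l₁ (fun i => x i.1)) '' S ⊆ Y₁)
    (hY₂ : (fun x : Fin n → ℂ => l₂ (fun j => x j.1)) '' S ⊆ Y₂)
    (h₁ : Set.InjOn l₁ ((fun x : Fin n → ℂ => fun i : {x // x ∈ I} => x i.1) '' S))
    (h₂ : Set.InjOn l₂ ((fun x : Fin n → ℂ => fun j : {x // x ∈ J} => x j.1) '' S))
    (hs : Set.InjOn (fun p : ℂ × ℂ => p.1 + s * p.2) (Y₁ ×ˢ Y₂)) :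
    Set.InjOn
      (fun v : (k : {x // x ∈ I ∪ J}) → ℂ =>
        l₁ (fun i => v ⟨i.1, Finset.mem_union_left J i.2⟩) +
          s * l₂ (fun j => v ⟨j.1, Finset.mem_union_right I j.2⟩))
      ((fun x : Fin n → ℂ => fun k : {x // x ∈ I ∪ J} => x k.1) '' S) := by
  rintro _ ⟨x, hx, rfl⟩ _ ⟨y, hy, rfl⟩ h
  have hp := hs (Set.mk_mem_prod (hY₁ ⟨x, hx, rfl⟩) (hY₂ ⟨x, hx, rfl⟩))
    (Set.mk_mem_prod (hY₁ ⟨y, hy, rfl⟩) (hY₂ ⟨y, hy, rfl⟩)) h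
  have h1 := h₁ ⟨x, hx, rfl⟩ ⟨y, hy, rfl⟩ (congrArg Prod.fst hp)
  have h2 := h₂ ⟨x, hx, rfl⟩ ⟨y, hy, rfl⟩ (congrArg Prod.snd hp)
  funext k
  rcases Finset.mem_union.1 k.2 with hk | hk
  · exact congrFun h1 ⟨k.1, hk⟩
  · exact congrFun h2 ⟨k.1, hk⟩
end

section
/- Let f₁,...,fₙ ∈ ℂ[x₁,...,xₙ] with total degrees d₁,...,dₙ, and suppose each fᵢ contains a monomial of total degree dᵢ that does not involve the variable x₁. Let Fᵢ be the homogenization of fᵢ with respect to a new variable x_{n+1}. Then for every ξ ∈ ℂ, the homogenization Fᵢ' (in x_{n+1}) of the specialized polynomial fᵢ' := fᵢ(ξ, x₂,...,xₙ) has degree dᵢ, and Fᵢ'(x₂,...,xₙ,0) = Fᵢ(0, x₂,...,xₙ, 0). Consequently, if the homogeneous system F₁ = ... = Fₙ = 0 has no nontrivial solution with x_{n+1} = 0, then for every ξ ∈ ℂ the specialized homogeneous system F₁' = ... = Fₙ' = 0 has no nontrivial solution with x_{n+1} = 0. -/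
open MvPolynomial

private lemma deg_eq_sum {k : ℕ} (m : Fin k →₀ ℕ) : m.degree = ∑ j, m j :=
  Finset.sum_subset (Finset.subset_univ _)
    (fun _ _ hj => Finsupp.notMem_support_iff.mp hj)

private lemma sub_monomial {n : ℕ} (ξ : ℂ) (m : Fin (n+1) →₀ ℕ) (c : ℂ) :
    (aeval fun j : Fin (n + 1) => if j = 0 then C ξ else X j) (monomial m c) =
      C (ξ ^ m 0) * monomial (m.erase 0) c := by
  rw [aeval_monomial, monomial_eq,
    Finsupp.prod_fintype _ _ (fun j => pow_zero _),
    Finsupp.prod_fintype _ _ (fun j => pow_zero _),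
    Fin.prod_univ_succ, Fin.prod_univ_succ]
  simp only [if_neg (Fin.succ_ne_zero _), Finsupp.erase_same,
    Finsupp.erase_ne (Fin.succ_ne_zero _), pow_zero, algebraMap_eq, if_true,
    eq_self_iff_true, one_mul, ← C_pow]
  ring

private lemma homComp_monomial {n : ℕ} (D : ℕ) (m : Fin (n+1) →₀ ℕ) (c : ℂ) :
    homogeneousComponent D (monomial m c) =
      if (∑ j, m j) = D then monomial m c else 0 := by
  rw [homogeneousComponent_of_mem ((mem_homogeneousSubmodule _ _).mpr
    (isHomogeneous_monomial c (deg_eq_sum m)))]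
  by_cases h : (∑ j, m j) = D
  · rw [if_pos h, if_pos h.symm]
  · rw [if_neg h, if_neg (fun h' => h h'.symm)]

private lemma erase_sum {n : ℕ} (m : Fin (n+1) →₀ ℕ) :
    (∑ j, (m.erase 0) j) + m 0 = ∑ j, m j := by
  rw [Fin.sum_univ_succ, Fin.sum_univ_succ (f := fun j => m j)]
  simp [Finsupp.erase_same, Finsupp.erase_ne (Fin.succ_ne_zero _)]
  ring

private lemma erase_eq_self {n : ℕ} (m : Fin (n+1) →₀ ℕ) (h1 : m 0 = 0) :
    m.erase 0 = m := by
  ext j; by_cases hj : j = 0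
  · subst hj; simp [Finsupp.erase_same, h1]
  · rw [Finsupp.erase_ne hj]

private lemma key {n : ℕ} (ξ : ℂ) (D : ℕ) (p : MvPolynomial (Fin (n+1)) ℂ)
    (hp : p.totalDegree ≤ D) :
    homogeneousComponent D ((aeval fun j : Fin (n + 1) => if j = 0 then C ξ else X j) p) =
      (aeval fun j : Fin (n + 1) => if j = 0 then (0 : MvPolynomial (Fin (n + 1)) ℂ) else X j)
        (homogeneousComponent D p) := by
  have h0 : (fun j : Fin (n + 1) => if j = 0 then (0 : MvPolynomial (Fin (n + 1)) ℂ) else X j)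
      = fun j : Fin (n + 1) => if j = 0 then C (0 : ℂ) else X j := by
    funext j; simp
  rw [h0]
  conv_lhs => rw [p.as_sum]
  conv_rhs => rw [p.as_sum]
  rw [map_sum, map_sum, map_sum, map_sum]
  refine Finset.sum_congr rfl fun m hm => ?_
  have hmD : (∑ j, m j) ≤ D := by
    have := le_totalDegree hm
    rw [Finsupp.sum_fintype _ _ (fun _ => rfl)] at this
    exact this.trans hp
  rw [sub_monomial, homogeneousComponent_C_mul, homComp_monomial, homComp_monomial]
  by_cases h1 : m 0 = 0
  · rw [erase_eq_self m h1]
    by_cases h2 : (∑ j, m j) = D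
    · rw [if_pos h2, sub_monomial, erase_eq_self m h1, h1]
      simp
    · rw [if_neg h2, mul_zero]
      simp
  · have hlt : (∑ j, (m.erase 0) j) ≠ D := by
      have := erase_sum m
      omega
    rw [if_neg hlt, mul_zero]
    by_cases h2 : (∑ j, m j) = D
    · rw [if_pos h2, sub_monomial, zero_pow h1]
      simp
    · rw [if_neg h2]
      simp

private lemma coeff_sub0 {n : ℕ} (p : MvPolynomial (Fin (n+1)) ℂ)
    (m : Fin (n+1) →₀ ℕ) (hm0 : m 0 = 0) :
    coeff m ((aeval fun j : Fin (n + 1) =>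
        if j = 0 then (0 : MvPolynomial (Fin (n + 1)) ℂ) else X j) p) = coeff m p := by
  have h0 : (fun j : Fin (n + 1) => if j = 0 then (0 : MvPolynomial (Fin (n + 1)) ℂ) else X j)
      = fun j : Fin (n + 1) => if j = 0 then C (0 : ℂ) else X j := by
    funext j; simp
  rw [h0]
  conv_lhs => rw [p.as_sum]
  rw [map_sum]
  conv_rhs => rw [p.as_sum]
  rw [coeff_sum, coeff_sum]
  refine Finset.sum_congr rfl fun v hv => ?_
  rw [sub_monomial]
  by_cases h1 : v 0 = 0
  · rw [erase_eq_self v h1, h1, pow_zero, map_one, one_mul]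
  · rw [zero_pow h1, map_zero, zero_mul, coeff_monomial,
      if_neg (fun h => h1 (by rw [h]; exact hm0)), coeff_zero]

/-- If each `fᵢ` (total degree `dᵢ`) contains a top-degree monomial not
involving the first variable, then for every `ξ ∈ ℂ` the specialization
`fᵢ' = fᵢ(ξ, x₂, …)` still has degree `dᵢ`, and the top-degree homogeneous part of `fᵢ'`
(which is `Fᵢ'(x₂,…,xₙ,0)` for the homogenization `Fᵢ'`) equals the top-degree part of
`fᵢ` with the first variable set to `0` (which is `Fᵢ(0,x₂,…,xₙ,0)`). Consequently, if
the top-degree parts of the `fᵢ` have no common nontrivial zero (no solution at infinity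
for the homogenized system), then neither do the top-degree parts of the specialized
system on vectors vanishing in the first coordinate (no infinite solution for the
specialized homogeneous system). -/
theorem stmt_5 (n N : ℕ) (f : Fin N → MvPolynomial (Fin (n + 1)) ℂ) (d : Fin N → ℕ)
    (hdeg : ∀ i, (f i).totalDegree = d i)
    (hterm : ∀ i, ∃ m ∈ (f i).support, (∑ j, m j) = d i ∧ m 0 = 0) :
    (∀ ξ : ℂ, ∀ i,
      ((aeval fun j : Fin (n + 1) => if j = 0 then C ξ else X j) (f i)).totalDegree = d i ∧
      homogeneousComponent (d i)
          ((aeval fun j : Fin (n + 1) => if j = 0 then C ξ else X j) (f i)) =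
        (aeval fun j : Fin (n + 1) => if j = 0 then (0 : MvPolynomial (Fin (n + 1)) ℂ) else X j)
          (homogeneousComponent (d i) (f i))) ∧
    ((∀ x : Fin (n + 1) → ℂ, x ≠ 0 →
        ∃ i, eval x (homogeneousComponent (d i) (f i)) ≠ 0) →
      ∀ ξ : ℂ, ∀ x : Fin (n + 1) → ℂ, x 0 = 0 → x ≠ 0 →
        ∃ i, eval x (homogeneousComponent (d i)
          ((aeval fun j : Fin (n + 1) => if j = 0 then C ξ else X j) (f i))) ≠ 0) := by
  have hkey : ∀ ξ : ℂ, ∀ i, homogeneousComponent (d i)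
      ((aeval fun j : Fin (n + 1) => if j = 0 then C ξ else X j) (f i)) =
      (aeval fun j : Fin (n + 1) => if j = 0 then (0 : MvPolynomial (Fin (n + 1)) ℂ) else X j)
        (homogeneousComponent (d i) (f i)) := fun ξ i => key ξ (d i) (f i) (hdeg i).le
  have hne : ∀ ξ : ℂ, ∀ i, homogeneousComponent (d i)
      ((aeval fun j : Fin (n + 1) => if j = 0 then C ξ else X j) (f i)) ≠ 0 := by
    intro ξ i h
    obtain ⟨m, hm, hsum, hm0⟩ := hterm i
    have : coeff m (homogeneousComponent (d i)
        ((aeval fun j : Fin (n + 1) => if j = 0 then C ξ else X j) (f i))) = coeff m (f i) := by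
      rw [hkey, coeff_sub0 _ _ hm0, coeff_homogeneousComponent, deg_eq_sum, if_pos hsum]
    rw [h] at this
    simp only [coeff_zero] at this
    exact (mem_support_iff.mp hm) this.symm
  constructor
  · intro ξ i
    refine ⟨le_antisymm ?_ ?_, hkey ξ i⟩
    · conv_lhs => rw [(f i).as_sum, map_sum]
      refine totalDegree_finsetSum_le fun m hm => ?_
      rw [sub_monomial]
      refine (totalDegree_mul _ _).trans ?_
      have h1 : (C (ξ ^ m 0) : MvPolynomial (Fin (n+1)) ℂ).totalDegree = 0 := totalDegree_C _
      have h2 : (monomial (m.erase 0) (coeff m (f i))).totalDegree ≤ ∑ j, (m.erase 0) j := by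
        refine (totalDegree_monomial_le _ _).trans ?_
        exact le_of_eq (Finsupp.sum_fintype _ _ (fun _ => rfl))
      have h3 : (∑ j, m j) ≤ d i := by
        have := le_totalDegree hm
        rw [Finsupp.sum_fintype _ _ (fun _ => rfl), hdeg i] at this
        exact this
      have := erase_sum m
      omega
    · by_contra h
      push_neg at h
      exact hne ξ i (homogeneousComponent_eq_zero _ _ h)
  · intro hsol ξ x hx0 hx
    obtain ⟨i, hi⟩ := hsol x hx
    refine ⟨i, ?_⟩
    rw [hkey]
    have heval : ∀ q : MvPolynomial (Fin (n+1)) ℂ, eval x q = aeval x q := by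
      intro q; rw [← coe_aeval_eq_eval]; rfl
    have : eval x ((aeval fun j : Fin (n + 1) =>
        if j = 0 then (0 : MvPolynomial (Fin (n + 1)) ℂ) else X j)
        (homogeneousComponent (d i) (f i))) =
        eval x (homogeneousComponent (d i) (f i)) := by
      rw [heval, comp_aeval_apply]
      simp only [apply_ite (aeval x), map_zero, aeval_X]
      have hfx : (fun i : Fin (n + 1) => if i = 0 then (0 : ℂ) else x i) = x := by
        funext j
        by_cases hj : j = 0
        · subst hj; simp [hx0]
        · simp [hj]
      rw [hfx, heval]
    rw [this]
    exact hi
end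

section
/- Let f₁,...,fₙ ∈ ℂ[x₁,...,xₙ] and suppose (a) the homogenized system F₁ = ... = Fₙ = 0 has no solution at infinity (no nontrivial projective solution with x_{n+1} = 0), and (b) each fᵢ contains a monomial of total degree dᵢ = deg fᵢ not depending on x₁. Then for every ξ ∈ ℂ, the specialized system f₁(ξ,x₂,...,xₙ) = ... = fₙ(ξ,x₂,...,xₙ) = 0 has a solution in ℂ^{n-1} if and only if the homogenized specialized system F₁' = ... = Fₙ' = 0 has a nontrivial solution in ℙ^{n-1}. -/
open MvPolynomial Finset

/-- The degree-`D` homogenization of a polynomial in `N` variables, using a new last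
variable: each monomial of exponent vector `m` is multiplied by the new variable raised
to the power `D - |m|`. -/
noncomputable def homogenize {N : ℕ} (D : ℕ) (f : MvPolynomial (Fin N) ℂ) :
    MvPolynomial (Fin (N + 1)) ℂ :=
  ∑ m ∈ f.support,
    monomial (Finsupp.equivFunOnFinite.symm (Fin.snoc (fun i => m i) (D - ∑ i, m i)))
      (f.coeff m)

lemma eval_homogenize_snoc {N D : ℕ} (g : MvPolynomial (Fin N) ℂ) (v : Fin N → ℂ) (t : ℂ) :
    eval (Fin.snoc v t) (homogenize D g) =
      ∑ m ∈ g.support, g.coeff m * (∏ j, v j ^ m j) * t ^ (D - ∑ j, m j) := by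
  unfold homogenize
  rw [map_sum]
  refine Finset.sum_congr rfl fun m hm => ?_
  rw [eval_monomial, Finsupp.prod_pow]
  rw [Fin.prod_univ_castSucc]
  simp [Fin.snoc_castSucc, Fin.snoc_last, mul_assoc]

lemma sumdeg_le {N : ℕ} {g : MvPolynomial (Fin N) ℂ} {m : Fin N →₀ ℕ} (hm : m ∈ g.support) :
    ∑ j, m j ≤ g.totalDegree := by
  have := MvPolynomial.le_totalDegree hm
  rwa [Finsupp.sum_fintype _ _ (fun _ => rfl)] at this

lemma eval_homogenize_one {N D : ℕ} (g : MvPolynomial (Fin N) ℂ) (v : Fin N → ℂ) :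
    eval (Fin.snoc v (1:ℂ)) (homogenize D g) = eval v g := by
  rw [eval_homogenize_snoc, eval_eq']
  exact Finset.sum_congr rfl fun m hm => by simp

lemma eval_homogenize_zero {N D : ℕ} (g : MvPolynomial (Fin N) ℂ) (v : Fin N → ℂ)
    (hD : ∀ m ∈ g.support, ∑ j, m j ≤ D) :
    eval (Fin.snoc v (0:ℂ)) (homogenize D g) =
      ∑ m ∈ g.support.filter (fun m => ∑ j, m j = D), g.coeff m * ∏ j, v j ^ m j := by
  rw [eval_homogenize_snoc, Finset.sum_filter]
  refine Finset.sum_congr rfl fun m hm => ?_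
  by_cases h : ∑ j, m j = D
  · simp [h]
  · rw [if_neg h, zero_pow (by have := hD m hm; omega), mul_zero]

-- tail and cons-zero operations on exponent vectors
noncomputable def tl {n : ℕ} (m : Fin (n+1) →₀ ℕ) : Fin n →₀ ℕ :=
  Finsupp.equivFunOnFinite.symm (fun i => m i.succ)

noncomputable def cz {n : ℕ} (m' : Fin n →₀ ℕ) : Fin (n+1) →₀ ℕ :=
  Finsupp.equivFunOnFinite.symm (Fin.cons 0 m')

@[simp] lemma tl_apply {n : ℕ} (m : Fin (n+1) →₀ ℕ) (i : Fin n) : tl m i = m i.succ := rfl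
@[simp] lemma cz_zero {n : ℕ} (m' : Fin n →₀ ℕ) : cz m' 0 = 0 := rfl
@[simp] lemma cz_succ {n : ℕ} (m' : Fin n →₀ ℕ) (i : Fin n) : cz m' i.succ = m' i := by
  simp [cz, Fin.cons_succ]

lemma tl_cz {n : ℕ} (m' : Fin n →₀ ℕ) : tl (cz m') = m' := by
  ext i; simp

lemma cz_tl {n : ℕ} (m : Fin (n+1) →₀ ℕ) (h0 : m 0 = 0) : cz (tl m) = m := by
  ext i
  refine Fin.cases ?_ (fun j => ?_) i
  · simp [h0]
  · simp

lemma aeval_cases_eq {n : ℕ} (ξ : ℂ) (g : MvPolynomial (Fin (n+1)) ℂ) :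
    aeval (Fin.cases (C ξ) X : Fin (n + 1) → MvPolynomial (Fin n) ℂ) g
      = ∑ m ∈ g.support, monomial (tl m) (coeff m g * ξ ^ m 0) := by
  conv_lhs => rw [g.as_sum]
  rw [map_sum]
  refine Finset.sum_congr rfl fun m hm => ?_
  rw [aeval_monomial, Finsupp.prod_pow, Fin.prod_univ_succ, monomial_eq, Finsupp.prod_pow]
  simp only [Fin.cases_zero, Fin.cases_succ, tl_apply, map_mul, map_pow]
  ring_nf
  simp [algebraMap_eq, mul_comm, mul_assoc, mul_left_comm]

lemma coeff_aeval_cases {n : ℕ} (ξ : ℂ) (g : MvPolynomial (Fin (n+1)) ℂ) (m' : Fin n →₀ ℕ) :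
    coeff m' (aeval (Fin.cases (C ξ) X : Fin (n + 1) → MvPolynomial (Fin n) ℂ) g)
      = ∑ m ∈ g.support, if tl m = m' then coeff m g * ξ ^ m 0 else 0 := by
  rw [aeval_cases_eq]
  rw [coeff_sum]
  exact Finset.sum_congr rfl fun m hm => by rw [coeff_monomial]

lemma support_aeval_cases {n : ℕ} {ξ : ℂ} {g : MvPolynomial (Fin (n+1)) ℂ} {m' : Fin n →₀ ℕ}
    (h : m' ∈ (aeval (Fin.cases (C ξ) X : Fin (n + 1) → MvPolynomial (Fin n) ℂ) g).support) :
    ∃ m ∈ g.support, tl m = m' := by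
  rw [mem_support_iff, coeff_aeval_cases] at h
  obtain ⟨m, hm, hne⟩ := Finset.exists_ne_zero_of_sum_ne_zero h
  refine ⟨m, hm, ?_⟩
  by_contra hc
  simp [hc] at hne

lemma degsum_aeval_le {n : ℕ} {ξ : ℂ} {g : MvPolynomial (Fin (n+1)) ℂ} {D : ℕ}
    (hD : ∀ m ∈ g.support, ∑ j, m j ≤ D) {m' : Fin n →₀ ℕ}
    (h : m' ∈ (aeval (Fin.cases (C ξ) X : Fin (n + 1) → MvPolynomial (Fin n) ℂ) g).support) :
    ∑ i, m' i ≤ D := by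
  obtain ⟨m, hm, rfl⟩ := support_aeval_cases h
  have := hD m hm
  rw [Fin.sum_univ_succ] at this
  simpa using le_trans (Nat.le_add_left _ _) this

lemma coeff_aeval_top {n : ℕ} (ξ : ℂ) (g : MvPolynomial (Fin (n+1)) ℂ) {D : ℕ}
    (hD : ∀ m ∈ g.support, ∑ j, m j ≤ D) (m' : Fin n →₀ ℕ) (hm' : ∑ i, m' i = D) :
    coeff m' (aeval (Fin.cases (C ξ) X : Fin (n + 1) → MvPolynomial (Fin n) ℂ) g)
      = coeff (cz m') g := by
  rw [coeff_aeval_cases]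
  have : ∀ m ∈ g.support, (if tl m = m' then coeff m g * ξ ^ m 0 else 0)
      = if cz m' = m then coeff m g else 0 := by
    intro m hm
    by_cases h : tl m = m'
    · have hsum : ∑ j, m j = m 0 + ∑ i, m' i := by
        rw [Fin.sum_univ_succ]; congr 1; rw [← h]; rfl
      have h0 : m 0 = 0 := by have := hD m hm; omega
      have hmeq : cz m' = m := by rw [← h, cz_tl m h0]
      rw [if_pos hmeq, if_pos h, h0, pow_zero, mul_one]
    · rw [if_neg h, if_neg]
      intro hc
      exact h (by rw [← hc, tl_cz])
  rw [Finset.sum_congr rfl this, Finset.sum_ite_eq]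
  by_cases h : cz m' ∈ g.support
  · rw [if_pos h]
  · rw [if_neg h, eq_comm, ← MvPolynomial.notMem_support_iff] ; exact h

lemma eval_homog_aeval_zero {n : ℕ} (ξ : ℂ) (g : MvPolynomial (Fin (n+1)) ℂ) {D : ℕ}
    (hD : ∀ m ∈ g.support, ∑ j, m j ≤ D) (x : Fin n → ℂ) :
    eval (Fin.snoc x (0:ℂ))
        (homogenize D (aeval (Fin.cases (C ξ) X : Fin (n + 1) → MvPolynomial (Fin n) ℂ) g))
      = eval (Fin.snoc (Fin.cons 0 x) (0:ℂ)) (homogenize D g) := by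
  set g' := aeval (Fin.cases (C ξ) X : Fin (n + 1) → MvPolynomial (Fin n) ℂ) g with hg'
  rw [eval_homogenize_zero g' x (fun m hm => degsum_aeval_le hD hm),
      eval_homogenize_zero g (Fin.cons 0 x) hD]
  -- restrict RHS to monomials with m 0 = 0
  rw [show (g.support.filter (fun m => ∑ j, m j = D))
      = (g.support.filter (fun m => ∑ j, m j = D ∧ m 0 = 0))
        ∪ (g.support.filter (fun m => ∑ j, m j = D ∧ m 0 ≠ 0)) by
    rw [← Finset.filter_or]; congr 1; ext m; tauto]
  rw [Finset.sum_union (by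
    rw [Finset.disjoint_left]
    intro m h1 h2
    rw [Finset.mem_filter] at h1 h2
    exact h2.2.2 h1.2.2)]
  have hzero : ∑ m ∈ g.support.filter (fun m => ∑ j, m j = D ∧ m 0 ≠ 0),
      coeff m g * ∏ j, (Fin.cons (0:ℂ) x) j ^ m j = 0 := by
    refine Finset.sum_eq_zero fun m hm => ?_
    rw [Finset.mem_filter] at hm
    rw [Fin.prod_univ_succ, Fin.cons_zero, zero_pow hm.2.2]
    ring
  rw [hzero, add_zero]
  refine Finset.sum_nbij' cz tl ?_ ?_ ?_ ?_ ?_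
  · intro m' hm'
    rw [Finset.mem_filter] at hm' ⊢
    obtain ⟨hsup, hsum⟩ := hm'
    refine ⟨?_, ?_, cz_zero m'⟩
    · rw [mem_support_iff]
      rw [mem_support_iff, hg', coeff_aeval_top ξ g hD m' hsum] at hsup
      exact hsup
    · rw [Fin.sum_univ_succ, cz_zero, zero_add]
      rw [← hsum]
      exact Finset.sum_congr rfl fun i _ => cz_succ m' i
  · intro m hm
    rw [Finset.mem_filter] at hm ⊢
    obtain ⟨hsup, hsum, h0⟩ := hm
    refine ⟨?_, ?_⟩
    · rw [mem_support_iff, hg', coeff_aeval_top ξ g hD (tl m) ?_, cz_tl m h0]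
      · exact mem_support_iff.mp hsup
      · rw [Fin.sum_univ_succ, h0, zero_add] at hsum; simpa using hsum
    · rw [Fin.sum_univ_succ, h0, zero_add] at hsum; simpa using hsum
  · intro m' hm'
    rw [Finset.mem_filter] at hm'
    exact tl_cz m'
  · intro m hm
    rw [Finset.mem_filter] at hm
    exact cz_tl m hm.2.2

  · intro m' hm'
    rw [Finset.mem_filter] at hm'
    rw [hg', coeff_aeval_top ξ g hD m' hm'.2]
    congr 1
    rw [Fin.prod_univ_succ, cz_zero, pow_zero, one_mul]
    exact Finset.prod_congr rfl fun i _ => by rw [cz_succ, Fin.cons_succ]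

lemma eval_homogenize_scale {N D : ℕ} (g : MvPolynomial (Fin N) ℂ) (v : Fin N → ℂ) (t : ℂ)
    (ht : t ≠ 0) (hD : ∀ m ∈ g.support, ∑ j, m j ≤ D) :
    eval (Fin.snoc v t) (homogenize D g) = t ^ D * eval (fun j => v j / t) g := by
  rw [eval_homogenize_snoc, eval_eq', Finset.mul_sum]
  refine Finset.sum_congr rfl fun m hm => ?_
  rw [pow_sub₀ t ht (hD m hm)]
  have h2 : ∏ j, (v j / t) ^ m j = (∏ j, v j ^ m j) / t ^ (∑ j, m j) := by
    simp_rw [div_pow]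
    rw [Finset.prod_div_distrib, Finset.prod_pow_eq_pow_sum]
  rw [h2]
  have hpow : t ^ (∑ j, m j) ≠ 0 := pow_ne_zero _ ht
  field_simp


/-- Suppose (a) the homogenized system `F₁ = ⋯ = Fₙ = 0` has no solution at
infinity and (b) each `fᵢ` contains a monomial of total degree `dᵢ = deg fᵢ` not depending
on the first variable. Then for every `ξ ∈ ℂ`, the specialized affine system
`fᵢ(ξ, x₂, …) = 0` has a solution iff the homogenized specialized system
`F₁' = ⋯ = Fₙ' = 0` has a nontrivial solution. (The first variable has index `0`;
`fᵢ' := fᵢ(ξ, ·)` is obtained via `aeval (Fin.cases (C ξ) X)`.) -/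
theorem stmt_11 (n K : ℕ) (f : Fin K → MvPolynomial (Fin (n + 1)) ℂ) (d : Fin K → ℕ)
    (hdeg : ∀ i, (f i).totalDegree = d i)
    (hinf : ∀ x : Fin (n + 1) → ℂ, x ≠ 0 →
      (∀ i, eval (Fin.snoc x (0 : ℂ)) (homogenize (d i) (f i)) = 0) → False)
    (hterm : ∀ i, ∃ m ∈ (f i).support, (∑ j, m j) = d i ∧ m 0 = 0) :
    ∀ ξ : ℂ,
      (∃ y : Fin n → ℂ, ∀ i,
          eval y ((aeval (Fin.cases (C ξ) X : Fin (n + 1) → MvPolynomial (Fin n) ℂ))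
            (f i)) = 0) ↔
      (∃ z : Fin (n + 1) → ℂ, z ≠ 0 ∧ ∀ i,
          eval z (homogenize (d i)
            ((aeval (Fin.cases (C ξ) X : Fin (n + 1) → MvPolynomial (Fin n) ℂ))
              (f i))) = 0) := by
  intro ξ
  have hDf : ∀ i, ∀ m ∈ (f i).support, ∑ j, m j ≤ d i :=
    fun i m hm => (hdeg i) ▸ sumdeg_le hm
  constructor
  · rintro ⟨y, hy⟩
    refine ⟨Fin.snoc y 1, ?_, fun i => ?_⟩
    · intro h
      have := congrFun h (Fin.last n)
      simp [Fin.snoc_last] at this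
    · rw [eval_homogenize_one]
      exact hy i
  · rintro ⟨z, hz, hzi⟩
    set x : Fin n → ℂ := fun j => z j.castSucc with hx_def
    have hz_eq : z = Fin.snoc x (z (Fin.last n)) := by
      funext j
      refine Fin.lastCases ?_ ?_ j
      · simp
      · intro k; simp [hx_def]
    by_cases ht : z (Fin.last n) = 0
    · exfalso
      have hx : x ≠ 0 := by
        intro h0
        apply hz
        funext j
        refine Fin.lastCases ?_ ?_ j
        · exact ht
        · intro k
          have := congrFun h0 k
          simpa [hx_def] using this
      refine hinf (Fin.cons 0 x) ?_ fun i => ?_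
      · intro h0
        apply hx
        funext k
        have := congrFun h0 k.succ
        simpa using this
      · rw [← eval_homog_aeval_zero ξ (f i) (hDf i) x]
        rw [ht] at hz_eq
        rw [← hz_eq]
        exact hzi i
    · refine ⟨fun j => z j.castSucc / z (Fin.last n), fun i => ?_⟩
      have h := hzi i
      rw [hz_eq] at h
      rw [eval_homogenize_scale _ _ _ ht
        (fun m hm => degsum_aeval_le (hDf i) hm)] at h
      rcases mul_eq_zero.mp h with h | h
      · exact absurd h (pow_ne_zero _ ht)
      · exact h
end
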